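/- arXiv:1909.10140 — 9 statements merged into one kernel-verified Lean document; each statement's English description precedes it below -/
import Mathlib

section
/- Let (X, Y) be random variables with Y not almost surely constant, and define ξ(X,Y) = (∫ Var(E[1_{Y ≥ t} | X]) dμ(t)) / (∫ Var(1_{Y ≥ t}) dμ(t)) where μ is the law of Y. If X and Y are independent, then ξ(X,Y) = 0. -/
open MeasureTheory ProbabilityTheory

lemma variance_eq_zero_of_ae_eq_const {Ω : Type*} [MeasurableSpace Ω] {μ : Measure Ω}
    [IsProbabilityMeasure μ] {f : Ω → ℝ} {c : ℝ} (h : f =ᵐ[μ] fun _ => c) : Var[f; μ] = 0 := by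
  rw [variance_congr h, variance_eq_integral aemeasurable_const]
  simp

lemma ProbabilityTheory.IndepFun.variance_condExp_comap_eq_zero {Ω β γ : Type*}
    [MeasurableSpace Ω] {mβ : MeasurableSpace β} {mγ : MeasurableSpace γ} {μ : Measure Ω}
    [IsProbabilityMeasure μ] {X : Ω → β} {Y : Ω → γ} (hX : Measurable X) (hY : Measurable Y)
    (hXY : IndepFun X Y μ) {f : Ω → ℝ} (hf : StronglyMeasurable[mγ.comap Y] f) :
    Var[μ[f | mβ.comap X]; μ] = 0 :=
  variance_eq_zero_of_ae_eq_const (condExp_indep_eq hY.comap_le hX.comap_le hf hXY.symm)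

theorem stmt_5_general {Ω : Type*} [MeasureSpace Ω] [IsProbabilityMeasure (ℙ : Measure Ω)]
    (X Y : Ω → ℝ) (hX : Measurable X) (hY : Measurable Y)
    (hindep : IndepFun X Y ℙ) :
    (∫ t, variance (ℙ[fun ω => if t ≤ Y ω then (1 : ℝ) else 0
            | MeasurableSpace.comap X inferInstance]) ℙ ∂(Measure.map Y ℙ))
        / (∫ t, variance (fun ω => if t ≤ Y ω then (1 : ℝ) else 0) ℙ
            ∂(Measure.map Y ℙ)) = 0 := by
  have hnum (t : ℝ) : Var[ℙ[fun ω => if t ≤ Y ω then (1 : ℝ) else 0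
      | MeasurableSpace.comap X inferInstance]; ℙ] = 0 := by
    have hg : Measurable fun s : ℝ => if t ≤ s then (1 : ℝ) else 0 :=
      measurable_const.ite measurableSet_Ici measurable_const
    exact hindep.variance_condExp_comap_eq_zero hX hY
      (hg.comp (comap_measurable Y)).stronglyMeasurable
  simp [hnum]

/-- If `X` and `Y` are independent (and `Y` is not a.s. constant, so the
denominator is positive), then Chatterjee's coefficient `ξ(X,Y) = 0`. -/
theorem stmt_5 {Ω : Type*} [MeasureSpace Ω] [IsProbabilityMeasure (ℙ : Measure Ω)]
    (X Y : Ω → ℝ) (hX : Measurable X) (hY : Measurable Y)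
    (hden : 0 < ∫ t, variance (fun ω => if t ≤ Y ω then (1 : ℝ) else 0) ℙ
      ∂(Measure.map Y ℙ))
    (hindep : IndepFun X Y ℙ) :
    (∫ t, variance (ℙ[fun ω => if t ≤ Y ω then (1 : ℝ) else 0
            | MeasurableSpace.comap X inferInstance]) ℙ ∂(Measure.map Y ℙ))
        / (∫ t, variance (fun ω => if t ≤ Y ω then (1 : ℝ) else 0) ℙ
            ∂(Measure.map Y ℙ)) = 0 :=
  stmt_5_general X Y hX hY hindep
end

section
/- Let (X, Y) be random variables with Y not almost surely constant. If Y = f(X) almost surely for some measurable function f : ℝ → ℝ, then ξ(X,Y) = 1, where ξ(X,Y) = (∫ Var(E[1_{Y ≥ t} | X]) dμ(t)) / (∫ Var(1_{Y ≥ t}) dμ(t)) and μ is the law of Y. -/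
open MeasureTheory ProbabilityTheory

lemma my_variance_congr {Ω : Type*} {m : MeasurableSpace Ω} {μ : Measure Ω}
    {f g : Ω → ℝ} (h : f =ᵐ[μ] g) : variance f μ = variance g μ := by
  unfold ProbabilityTheory.variance ProbabilityTheory.evariance
  have hint : μ[f] = μ[g] := integral_congr_ae h
  congr 1
  refine lintegral_congr_ae ?_
  filter_upwards [h] with ω hω
  rw [hω, hint]

/-- If `Y = f(X)` almost surely for a measurable `f` (and `Y` is not a.s. constant,
so the denominator is positive), then Chatterjee's coefficient `ξ(X,Y) = 1`. -/
theorem stmt_6 {Ω : Type*} [MeasureSpace Ω] [IsProbabilityMeasure (ℙ : Measure Ω)]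
    (X Y : Ω → ℝ) (hX : Measurable X) (hY : Measurable Y)
    (hden : 0 < ∫ t, variance (fun ω => if t ≤ Y ω then (1 : ℝ) else 0) ℙ
      ∂(Measure.map Y ℙ))
    (f : ℝ → ℝ) (hf : Measurable f) (hYf : ∀ᵐ ω ∂(ℙ : Measure Ω), Y ω = f (X ω)) :
    (∫ t, variance (ℙ[fun ω => if t ≤ Y ω then (1 : ℝ) else 0
            | MeasurableSpace.comap X inferInstance]) ℙ ∂(Measure.map Y ℙ))
        / (∫ t, variance (fun ω => if t ≤ Y ω then (1 : ℝ) else 0) ℙ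
            ∂(Measure.map Y ℙ)) = 1 := by
  have hm : MeasurableSpace.comap X inferInstance ≤ (inferInstance : MeasurableSpace Ω) :=
    hX.comap_le
  haveI : SigmaFinite ((ℙ : Measure Ω).trim hm) := inferInstance
  have key : ∀ t : ℝ,
      variance (ℙ[fun ω => if t ≤ Y ω then (1 : ℝ) else 0
        | MeasurableSpace.comap X inferInstance]) ℙ
        = variance (fun ω => if t ≤ Y ω then (1 : ℝ) else 0) ℙ := by
    intro t
    have hgh : (fun ω => if t ≤ Y ω then (1 : ℝ) else 0)
        =ᵐ[ℙ] (fun ω => if t ≤ f (X ω) then (1 : ℝ) else 0) := by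
      filter_upwards [hYf] with ω hω
      simp [hω]
    have hs : MeasurableSet[MeasurableSpace.comap X inferInstance] {ω | t ≤ f (X ω)} :=
      ⟨f ⁻¹' Set.Ici t, hf measurableSet_Ici, rfl⟩
    have hsm : StronglyMeasurable[MeasurableSpace.comap X inferInstance]
        (fun ω => if t ≤ f (X ω) then (1 : ℝ) else 0) :=
      Measurable.stronglyMeasurable (Measurable.ite hs measurable_const measurable_const)
    have hint : Integrable (fun ω => if t ≤ f (X ω) then (1 : ℝ) else 0) ℙ := by
      refine (integrable_const (1 : ℝ)).mono' (hsm.mono hm).aestronglyMeasurable ?_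
      filter_upwards with ω
      by_cases hc : t ≤ f (X ω) <;> simp [hc]
    have hce : ℙ[fun ω => if t ≤ Y ω then (1 : ℝ) else 0
        | MeasurableSpace.comap X inferInstance]
        =ᵐ[ℙ] (fun ω => if t ≤ Y ω then (1 : ℝ) else 0) := by
      calc ℙ[fun ω => if t ≤ Y ω then (1 : ℝ) else 0
            | MeasurableSpace.comap X inferInstance]
          =ᵐ[ℙ] ℙ[fun ω => if t ≤ f (X ω) then (1 : ℝ) else 0
            | MeasurableSpace.comap X inferInstance] := condExp_congr_ae hgh
        _ = fun ω => if t ≤ f (X ω) then (1 : ℝ) else 0 :=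
            condExp_of_stronglyMeasurable hm hsm hint
        _ =ᵐ[ℙ] fun ω => if t ≤ Y ω then (1 : ℝ) else 0 := hgh.symm
    exact my_variance_congr hce
  rw [integral_congr_ae (Filter.Eventually.of_forall key), div_self hden.ne']
end

section
/- Let Y be a real random variable with G(t) = P(Y ≥ t) and law μ. If Y is not almost surely constant, then ∫ G(t)(1 - G(t)) dμ(t) > 0. -/
/-!
The integrand is `μ [t, ∞) · μ (-∞, t)`. If the integral vanished, one of the two factors
would vanish for `μ`-a.e. `t`. The set of `t` with `μ [t, ∞) = 0` is `μ`-null, being locally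
null in a second countable space, so `μ (-∞, t) = 0` for a.e. `t`. The same Lindelöf argument
shows that the set of such `t` has a largest element `c`, and then `μ` is concentrated at `c`.
-/

open MeasureTheory Set

section LinearOrder

variable {α : Type*} [LinearOrder α] [TopologicalSpace α] [OrderTopology α]
  [SecondCountableTopology α] [MeasurableSpace α]

lemma ae_measure_Ici_ne_zero (μ : Measure α) : ∀ᵐ t ∂μ, μ (Ici t) ≠ 0 := by
  refine measure_null_of_locally_null _ fun x hx => ?_
  -- Either a smaller point is already null, giving the null neighbourhood `Ioi y` of `x`,
  -- or `x` is the least null point and the whole set lies in `Ici x`.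
  rcases em (∃ y < x, μ (Ici y) = 0) with ⟨y, hyx, hy⟩ | hbelow
  · exact ⟨Ioi y, mem_nhdsWithin_of_mem_nhds (Ioi_mem_nhds hyx),
      measure_mono_null Ioi_subset_Ici_self hy⟩
  · refine ⟨Ici x, Filter.mem_of_superset self_mem_nhdsWithin fun y hy => ?_, not_not.1 hx⟩
    exact not_lt.1 fun hyx => hbelow ⟨y, hyx, not_not.1 hy⟩

lemma exists_measure_singleton_eq_one_of_ae_measure_Iio_eq_zero (μ : Measure α)
    [IsProbabilityMeasure μ] (h : ∀ᵐ t ∂μ, μ (Iio t) = 0) : ∃ c, μ {c} = 1 := by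
  set S := {t | μ (Iio t) = 0}
  have hSc : μ Sᶜ = 0 := h
  obtain ⟨c, hcS, hc⟩ : ∃ c ∈ S, ∀ t ∈ S, t ≤ c := by
    by_contra! hmax
    have hS : μ S = 0 := measure_null_of_locally_null S fun x hx =>
      let ⟨y, hy, hxy⟩ := hmax x hx
      ⟨Iio y, mem_nhdsWithin_of_mem_nhds (Iio_mem_nhds hxy), hy⟩
    simpa [hS, hSc] using measure_univ_le_add_compl (μ := μ) S
  have hIoi : μ (Ioi c) = 0 :=
    measure_mono_null (fun t ht htS => (hc t htS).not_gt ht) hSc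
  have hcompl : μ {c}ᶜ = 0 := by
    rw [← Iio_union_Ioi]
    exact measure_union_null hcS hIoi
  refine ⟨c, le_antisymm prob_le_one ?_⟩
  simpa [hcompl] using measure_univ_le_add_compl (μ := μ) {c}

lemma integral_measureReal_Ici_mul_measureReal_Iio_pos [BorelSpace α] (μ : Measure α)
    [IsProbabilityMeasure μ] (hμ : ¬ ∃ c, μ {c} = 1) :
    0 < ∫ t, μ.real (Ici t) * μ.real (Iio t) ∂μ := by
  have hnonneg : 0 ≤ fun t => μ.real (Ici t) * μ.real (Iio t) := fun t => by positivity
  have hmeas : Measurable fun t => μ.real (Ici t) * μ.real (Iio t) :=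
    (Antitone.measurable fun _ _ hst => measureReal_mono (Ici_subset_Ici.2 hst)).mul
      (Monotone.measurable fun _ _ hst => measureReal_mono (Iio_subset_Iio hst))
  have hint : Integrable (fun t => μ.real (Ici t) * μ.real (Iio t)) μ :=
    (integrable_const 1).mono' hmeas.aestronglyMeasurable <| ae_of_all _ fun t => by
      rw [Real.norm_of_nonneg (hnonneg t)]
      exact mul_le_one₀ measureReal_le_one measureReal_nonneg measureReal_le_one
  refine (integral_nonneg hnonneg).lt_of_ne fun h0 => hμ ?_
  refine exists_measure_singleton_eq_one_of_ae_measure_Iio_eq_zero μ ?_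
  filter_upwards [(integral_eq_zero_iff_of_nonneg hnonneg hint).1 h0.symm,
    ae_measure_Ici_ne_zero μ] with t ht hIci
  rcases mul_eq_zero.1 ht with h | h
  · exact absurd ((measureReal_eq_zero_iff (measure_ne_top μ _)).1 h) hIci
  · exact (measureReal_eq_zero_iff (measure_ne_top μ _)).1 h

end LinearOrder

/-- If `Y` (with law `μ` and `G t = P(Y ≥ t)`) is not almost surely constant,
then `∫ G(t)(1-G(t)) dμ(t) > 0`. -/
theorem stmt_7 (μ : Measure ℝ) [IsProbabilityMeasure μ]
    (G : ℝ → ℝ) (hG : ∀ t, G t = (μ (Set.Ici t)).toReal)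
    (hY : ¬ ∃ c : ℝ, μ {c} = 1) :
    0 < ∫ t, G t * (1 - G t) ∂μ := by
  have hG' : ∀ t, G t * (1 - G t) = μ.real (Ici t) * μ.real (Iio t) := fun t => by
    rw [hG, ← measureReal_def, ← probReal_compl_eq_one_sub measurableSet_Ici, compl_Ici]
  simpa only [hG'] using integral_measureReal_Ici_mul_measureReal_Iio_pos μ hY
end

section
/- Let (X, Y) be random variables, let μ be the law of Y, and for each x let μ_x be a regular conditional distribution of Y given X = x, with G_x(t) = μ_x([t, ∞)) and G(t) = P(Y ≥ t). If ∫ Var(G_X(t)) dμ(t) = 0, then X and Y are independent. -/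
/-!
A vanishing integral of the variances means that, for `μ`-a.e. `t`, the conditional survival
probability `G_X(t)` is a.s. constant, hence equal to its mean `P(Y ≥ t)`; integrating it over
`{X ∈ A}` gives `P(X ∈ A, Y ≥ t) = P(X ∈ A) P(Y ≥ t)`. So the law of `Y` on `{X ∈ A}` and
`P(X ∈ A)` times the law of `Y`, both absolutely continuous with respect to `μ`, agree on `[t, ∞)`
for `μ`-a.e. `t`. This already forces them to agree on every `[t, ∞)`: off the support of `μ` one
moves `t` up to the infimum of the good points above it, approaching it from the right if it is
not attained. Hence the two measures coincide, which is independence.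
-/

open MeasureTheory ProbabilityTheory Set Filter Function
open scoped ENNReal

section IciExt

variable {α : Type*} [ConditionallyCompleteLinearOrder α] [TopologicalSpace α] [OrderTopology α]
  [FirstCountableTopology α] [MeasurableSpace α]

theorem MeasureTheory.measure_Ici_eq_of_measure_compl_eq_zero {ρ₁ ρ₂ : Measure α} {S : Set α}
    (h₁ : ρ₁ Sᶜ = 0) (h₂ : ρ₂ Sᶜ = 0) (hS : ∀ s ∈ S, ρ₁ (Ici s) = ρ₂ (Ici s)) (t : α) :
    ρ₁ (Ici t) = ρ₂ (Ici t) := by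
  set A := Ici t ∩ S
  have squeeze : ∀ {ρ : Measure α}, ρ Sᶜ = 0 → ∀ B, A ⊆ B → B ⊆ Ici t → ρ (Ici t) = ρ B :=
    fun hρ B hAB hBt =>
      le_antisymm ((measure_inter_conull hρ).symm.le.trans (measure_mono hAB)) (measure_mono hBt)
  rcases A.eq_empty_or_nonempty with hA | hA
  · rw [squeeze h₁ ∅ hA.le (empty_subset _), squeeze h₂ ∅ hA.le (empty_subset _), measure_empty,
      measure_empty]
  have hglb : IsGLB A (sInf A) := isGLB_csInf hA ⟨t, fun _ ha => ha.1⟩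
  by_cases hmem : sInf A ∈ A
  · have hAu : A ⊆ Ici (sInf A) := fun _ ha => hglb.1 ha
    have hut : Ici (sInf A) ⊆ Ici t := Ici_subset_Ici.mpr hmem.1
    rw [squeeze h₁ _ hAu hut, squeeze h₂ _ hAu hut]
    exact hS _ hmem.2
  -- the infimum is not attained, so `A` is exhausted by countably many `Ici (v n)` with `v n ∈ A`
  obtain ⟨v, hv_anti, -, hv_tendsto, hv_mem⟩ :=
    hglb.exists_seq_strictAnti_tendsto_of_notMem hmem hA
  have hAv : A ⊆ ⋃ n, Ici (v n) := by
    intro a ha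
    have hlt : sInf A < a := lt_of_le_of_ne (hglb.1 ha) fun h => hmem (h ▸ ha)
    obtain ⟨n, hn⟩ := (hv_tendsto.eventually (gt_mem_nhds hlt)).exists
    exact mem_iUnion.mpr ⟨n, hn.le⟩
  have hvt : (⋃ n, Ici (v n)) ⊆ Ici t := iUnion_subset fun n => Ici_subset_Ici.mpr (hv_mem n).1
  have hmono : Monotone fun n => Ici (v n) := fun _ _ hmn =>
    Ici_subset_Ici.mpr (hv_anti.antitone hmn)
  rw [squeeze h₁ _ hAv hvt, squeeze h₂ _ hAv hvt, hmono.measure_iUnion, hmono.measure_iUnion]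
  exact iSup_congr fun n => hS _ (hv_mem n).2

theorem MeasureTheory.Measure.ext_of_ae_Ici [SecondCountableTopology α] [BorelSpace α]
    {μ ρ₁ ρ₂ : Measure α} [IsFiniteMeasure ρ₁] (h₁ : ρ₁ ≪ μ) (h₂ : ρ₂ ≪ μ)
    (h : ∀ᵐ t ∂μ, ρ₁ (Ici t) = ρ₂ (Ici t)) : ρ₁ = ρ₂ :=
  Measure.ext_of_Ici _ _ (measure_Ici_eq_of_measure_compl_eq_zero (h₁ h) (h₂ h) fun _ hs => hs)

end IciExt

section Variance

variable {α Ω : Type*} [MeasurableSpace α] [MeasurableSpace Ω] {μ : Measure Ω}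

theorem measurable_variance [SFinite μ] {f : α → Ω → ℝ} (hf : Measurable (uncurry f)) :
    Measurable fun a => variance (f a) μ := by
  have hmean : Measurable fun a => ∫ ω, f a ω ∂μ :=
    hf.stronglyMeasurable.integral_prod_right'.measurable
  have hdev : Measurable fun p : α × Ω => ‖f p.1 p.2 - ∫ ω, f p.1 ω ∂μ‖ₑ ^ 2 :=
    ((hf.sub (hmean.comp measurable_fst)).enorm).pow_const 2
  exact hdev.lintegral_prod_right'.ennreal_toReal

theorem ae_ae_eq_integral_of_integral_variance_eq_zero [IsProbabilityMeasure μ] {ν : Measure α}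
    [IsFiniteMeasure ν] {f : α → Ω → ℝ} (hf : Measurable (uncurry f)) {l u : ℝ}
    (hbdd : ∀ a ω, f a ω ∈ Icc l u) (h : ∫ a, variance (f a) μ ∂ν = 0) :
    ∀ᵐ a ∂ν, ∀ᵐ ω ∂μ, f a ω = μ[f a] := by
  have hfa : ∀ a, Measurable (f a) := fun a => hf.comp measurable_prodMk_left
  have hint : Integrable (fun a => variance (f a) μ) ν := by
    refine Integrable.of_bound (measurable_variance hf).aestronglyMeasurable (((u - l) / 2) ^ 2)
      (.of_forall fun a => ?_)
    rw [Real.norm_of_nonneg (variance_nonneg _ _)]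
    exact variance_le_sq_of_bounded (.of_forall (hbdd a)) (hfa a).aemeasurable
  filter_upwards [(integral_eq_zero_iff_of_nonneg (fun a => variance_nonneg _ _) hint).mp h]
    with a ha
  exact ae_eq_integral_of_variance_eq_zero
    (memLp_of_bounded (.of_forall (hbdd a)) (hfa a).aestronglyMeasurable 2) ha

end Variance

section CondDistrib

variable {Ω α β : Type*} {mΩ : MeasurableSpace Ω} {P : Measure Ω} [IsProbabilityMeasure P]
  [MeasurableSpace α] [MeasurableSpace β] [StandardBorelSpace β] [Nonempty β]
  {X : Ω → α} {Y : Ω → β}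

theorem measure_inter_preimage_eq_mul_of_condDistrib_ae_eq_const (hX : Measurable X)
    (hY : Measurable Y) {s : Set β} (hs : MeasurableSet s) {c : ℝ≥0∞}
    (hc : ∀ᵐ ω ∂P, condDistrib Y X P (X ω) s = c) {A : Set α} (hA : MeasurableSet A) :
    P (X ⁻¹' A ∩ Y ⁻¹' s) = P (X ⁻¹' A) * P (Y ⁻¹' s) := by
  have hmul : ∀ A, MeasurableSet A → P (X ⁻¹' A ∩ Y ⁻¹' s) = c * P (X ⁻¹' A) := fun A hA => by
    rw [← setLIntegral_preimage_condDistrib hX hY.aemeasurable hs hA,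
      setLIntegral_congr_fun_ae (hX hA) (hc.mono fun _ h _ => h), setLIntegral_const]
  have hc_eq : P (Y ⁻¹' s) = c := by simpa using hmul univ MeasurableSet.univ
  rw [hmul A hA, hc_eq, mul_comm]

end CondDistrib

theorem ProbabilityTheory.Kernel.measurable_apply_Ici {α : Type*} [MeasurableSpace α]
    (κ : Kernel α ℝ) [IsSFiniteKernel κ] : Measurable fun p : ℝ × α => κ p.2 (Ici p.1) :=
  Kernel.measurable_kernel_prodMk_left (κ := κ.comap Prod.snd measurable_snd)
    (measurableSet_le (measurable_fst.comp measurable_fst) measurable_snd)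

theorem indepFun_of_ae_condDistrib_Ici_eq_const {Ω α : Type*} {mΩ : MeasurableSpace Ω}
    {P : Measure Ω} [IsProbabilityMeasure P] [MeasurableSpace α] {X : Ω → α} {Y : Ω → ℝ}
    (hX : Measurable X) (hY : Measurable Y)
    (h : ∀ᵐ t ∂P.map Y, ∃ c, ∀ᵐ ω ∂P, condDistrib Y X P (X ω) (Ici t) = c) :
    IndepFun X Y P := by
  rw [indepFun_iff_measure_inter_preimage_eq_mul]
  intro A B hA hB
  have hlaw : (P.restrict (X ⁻¹' A)).map Y = P (X ⁻¹' A) • P.map Y := by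
    refine Measure.ext_of_ae_Ici
      ((Measure.absolutelyContinuous_of_le Measure.restrict_le_self).map hY)
      Measure.smul_absolutelyContinuous ?_
    filter_upwards [h] with t ⟨c, hc⟩
    rw [Measure.map_apply hY measurableSet_Ici, Measure.restrict_apply (hY measurableSet_Ici),
      Measure.smul_apply, Measure.map_apply hY measurableSet_Ici, smul_eq_mul, inter_comm]
    exact measure_inter_preimage_eq_mul_of_condDistrib_ae_eq_const hX hY measurableSet_Ici hc hA
  simpa [Measure.map_apply hY hB, Measure.restrict_apply (hY hB), inter_comm] using
    congrArg (· B) hlaw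

/-- If the conditional law `μ_x` of `Y` given `X = x` satisfies
`∫ Var(G_X(t)) dμ(t) = 0`, where `G_x(t) = μ_x [t, ∞)` and `μ` is the law of `Y`,
then `X` and `Y` are independent. -/
theorem stmt_8 {Ω : Type*} [MeasureSpace Ω] [IsProbabilityMeasure (ℙ : Measure Ω)]
    (X Y : Ω → ℝ) (hX : Measurable X) (hY : Measurable Y)
    (h0 : ∫ t, variance
        (fun ω => ((condDistrib Y X ℙ) (X ω) (Set.Ici t)).toReal) ℙ
        ∂(Measure.map Y ℙ) = 0) :
    IndepFun X Y ℙ := by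
  have hG : Measurable (uncurry fun t ω => (condDistrib Y X ℙ (X ω) (Ici t)).toReal) :=
    ((condDistrib Y X ℙ).measurable_apply_Ici.comp
      (measurable_fst.prodMk (hX.comp measurable_snd))).ennreal_toReal
  have hconst := ae_ae_eq_integral_of_integral_variance_eq_zero hG
    (fun _ _ => ⟨ENNReal.toReal_nonneg, measureReal_le_one⟩) h0
  refine indepFun_of_ae_condDistrib_Ici_eq_const hX hY ?_
  filter_upwards [hconst] with t ht
  exact ⟨_, ht.mono fun ω hω => by rw [← ENNReal.ofReal_toReal (measure_ne_top _ _), hω]⟩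
end

section
/- Let X₁, X₂, ... be i.i.d. real random variables. For each n ≥ 2 let X_{n,1} be the element of {X_j : 2 ≤ j ≤ n} that is smallest among those that are ≥ X₁ (the nearest neighbor of X₁ to the right among X₂,...,Xₙ), with X_{n,1} := X₁ if no such element exists. Then X_{n,1} → X₁ almost surely as n → ∞. -/
open MeasureTheory ProbabilityTheory Filter Set
open scoped ENNReal Topology

/-!
Almost surely `X 0` avoids the `ν`-null set of points `x` with `ν [x, y) = 0` for some `y > x`, so
every interval `[X 0, b)` has positive mass. That mass sits either on the atom `{X 0}` or on some
`[r, q)` with rational `X 0 < r < q < b`. By the second Borel–Cantelli lemma each of these countably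
many sets of positive mass is visited infinitely often, so some `X j` with `j ≥ 1` lies in
`[X 0, b)`, and the right nearest neighbor is squeezed between `X 0` and `X j`.
-/

section RightNullIntervals

variable (ν : Measure ℝ)

lemma measure_setOf_lt_measure_Ico_eq_zero (q : ℝ) :
    ν {x | x < q ∧ ν (Ico x q) = 0} = 0 := by
  set s := {x | x < q ∧ ν (Ico x q) = 0}
  -- every point of `s` other than its least element lies above a rational point of `s`
  have hcover : s ⊆ (s ∩ lowerBounds s) ∪ ⋃ r : {r : ℚ // (r : ℝ) ∈ s}, Ico (r : ℝ) q := by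
    intro x hx
    by_cases hleast : x ∈ lowerBounds s
    · exact Or.inl ⟨hx, hleast⟩
    · obtain ⟨y, hys, hyx⟩ := not_forall₂.mp hleast
      obtain ⟨r, hyr, hrx⟩ := exists_rat_btwn (not_le.mp hyx)
      have hrs : (r : ℝ) ∈ s :=
        ⟨hrx.trans hx.1, measure_mono_null (Ico_subset_Ico_left hyr.le) hys.2⟩
      exact Or.inr (mem_iUnion.2 ⟨⟨r, hrs⟩, hrx.le, hx.1⟩)
  have hleast : ν (s ∩ lowerBounds s) = 0 := by
    rcases (s ∩ lowerBounds s).eq_empty_or_nonempty with h | ⟨a, has, ha⟩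
    · simp [h]
    · exact measure_mono_null (fun y hy => show y ∈ Ico a q from ⟨ha hy.1, hy.1.1⟩) has.2
  exact measure_mono_null hcover
    (measure_union_null hleast (measure_iUnion_null fun r => r.2.2))

lemma ae_measure_Ico_ne_zero : ∀ᵐ x ∂ν, ∀ y, x < y → ν (Ico x y) ≠ 0 := by
  rw [ae_iff]
  refine measure_mono_null (fun x hx => ?_)
    (measure_iUnion_null fun q : ℚ => measure_setOf_lt_measure_Ico_eq_zero ν q)
  obtain ⟨y, hxy, hy⟩ : ∃ y, x < y ∧ ν (Ico x y) = 0 := by simpa using hx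
  obtain ⟨q, hxq, hqy⟩ := exists_rat_btwn hxy
  exact mem_iUnion.2 ⟨q, hxq, measure_mono_null (Ico_subset_Ico_right hqy.le) hy⟩

lemma measure_singleton_ne_zero_or_exists_rat_measure_Ico_ne_zero {x q : ℝ}
    (h : ν (Ico x q) ≠ 0) : ν {x} ≠ 0 ∨ ∃ r : ℚ, x < r ∧ ν (Ico (r : ℝ) q) ≠ 0 := by
  contrapose! h
  refine measure_mono_null (fun z hz => ?_) (measure_union_null h.1
    (measure_iUnion_null fun r : {r : ℚ // x < r} => h.2 r r.2))
  rcases hz.1.eq_or_lt with rfl | hxz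
  · exact Or.inl rfl
  · obtain ⟨r, hxr, hrz⟩ := exists_rat_btwn hxz
    exact Or.inr (mem_iUnion.2 ⟨⟨r, hxr⟩, hrz.le, hz.2⟩)

lemma countable_setOf_measure_singleton_ne_zero [SFinite ν] :
    {a : ℝ | ν {a} ≠ 0}.Countable := by
  simpa only [pos_iff_ne_zero] using Measure.countable_meas_pos_of_disjoint_iUnion
    (μ := ν) (fun a => measurableSet_singleton a) fun _ _ hab => disjoint_singleton.2 hab

end RightNullIntervals
section BorelCantelli

variable {Ω β : Type*} [MeasurableSpace Ω] [MeasurableSpace β] {μ : Measure Ω}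
  [IsProbabilityMeasure μ] {X : ℕ → Ω → β} {ν : Measure β}

lemma ae_frequently_mem_of_iIndepFun (hX : ∀ i, Measurable (X i))
    (hiid : ∀ i, μ.map (X i) = ν) (hindep : iIndepFun X μ) {s : Set β}
    (hs : MeasurableSet s) (hνs : ν s ≠ 0) :
    ∀ᵐ ω ∂μ, ∃ᶠ j in atTop, X j ω ∈ s := by
  have hmeas : ∀ j, MeasurableSet (X j ⁻¹' s) := fun j => hX j hs
  have hset : iIndepSet (fun j => X j ⁻¹' s) μ :=
    (iIndepSet_iff_meas_biInter hmeas).2 fun t =>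
      hindep.measure_inter_preimage_eq_mul t fun _ _ => hs
  have hsum : ∑' j, μ (X j ⁻¹' s) = ∞ := by
    simp only [← Measure.map_apply (hX _) hs, hiid]
    exact ENNReal.tsum_const_eq_top_of_ne_zero hνs
  have hcompl := (prob_compl_eq_zero_iff (MeasurableSet.measurableSet_limsup hmeas)).2
    (measure_limsup_eq_one hmeas hset hsum)
  filter_upwards [measure_eq_zero_iff_ae_notMem.1 hcompl] with ω hω
  exact mem_limsup_iff_frequently_mem.1 (not_not.1 hω)

lemma ae_forall_frequently_mem_of_iIndepFun {ι : Type*} [Countable ι]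
    (hX : ∀ i, Measurable (X i)) (hiid : ∀ i, μ.map (X i) = ν) (hindep : iIndepFun X μ)
    {s : ι → Set β} (hs : ∀ i, MeasurableSet (s i)) :
    ∀ᵐ ω ∂μ, ∀ i, ν (s i) ≠ 0 → ∃ᶠ j in atTop, X j ω ∈ s i := by
  refine ae_all_iff.2 fun i => ?_
  by_cases hνs : ν (s i) = 0
  · exact Eventually.of_forall fun _ h => absurd hνs h
  · filter_upwards [ae_frequently_mem_of_iIndepFun hX hiid hindep (hs i) hνs] with ω hω
    exact fun _ => hω

end BorelCantelli

section RightNearestNeighbor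

def rightNeighbors (x : ℕ → ℝ) (n : ℕ) : Set ℝ :=
  {v | ∃ j, 1 ≤ j ∧ j < n ∧ x j = v ∧ x 0 ≤ v}

open scoped Classical in
noncomputable def rightNearestNeighbor (x : ℕ → ℝ) (n : ℕ) : ℝ :=
  if _ : (rightNeighbors x n).Nonempty then sInf (rightNeighbors x n) else x 0

variable {x : ℕ → ℝ}

lemma le_rightNearestNeighbor (n : ℕ) : x 0 ≤ rightNearestNeighbor x n := by
  unfold rightNearestNeighbor
  split_ifs with hne
  · exact le_csInf hne fun v ⟨_, _, _, _, hv⟩ => hv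
  · exact le_rfl

lemma rightNearestNeighbor_le {j n : ℕ} (hj : 1 ≤ j) (hjn : j < n) (hx : x 0 ≤ x j) :
    rightNearestNeighbor x n ≤ x j := by
  have hmem : x j ∈ rightNeighbors x n := ⟨j, hj, hjn, rfl, hx⟩
  rw [rightNearestNeighbor, dif_pos ⟨_, hmem⟩]
  exact csInf_le ⟨x 0, fun v ⟨_, _, _, _, hv⟩ => hv⟩ hmem

lemma tendsto_rightNearestNeighbor (h : ∀ b, x 0 < b → ∃ᶠ j in atTop, x j ∈ Ico (x 0) b) :
    Tendsto (rightNearestNeighbor x) atTop (𝓝 (x 0)) := by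
  refine tendsto_order.2 ⟨fun a ha => Eventually.of_forall fun n =>
    ha.trans_le (le_rightNearestNeighbor n), fun b hb => ?_⟩
  obtain ⟨j, hxj, hj⟩ := ((h b hb).and_eventually (eventually_ge_atTop 1)).exists
  filter_upwards [eventually_gt_atTop j] with n hjn
  exact (rightNearestNeighbor_le hj hjn hxj.1).trans_lt hxj.2

end RightNearestNeighbor

open scoped Classical in
/-- For an i.i.d. sequence `X 0, X 1, X 2, …`, the right nearest neighbor of `X 0`
among `X 1, …, X (n-1)` converges to `X 0` almost surely as `n → ∞`. -/
theorem stmt_9 {Ω : Type*} [MeasureSpace Ω] [IsProbabilityMeasure (ℙ : Measure Ω)]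
    (X : ℕ → Ω → ℝ) (hX : ∀ i, Measurable (X i))
    (ν : Measure ℝ) (hiid : ∀ i, Measure.map (X i) ℙ = ν)
    (hindep : iIndepFun X ℙ) :
    ∀ᵐ ω ∂(ℙ : Measure Ω),
      Tendsto (fun n =>
        if h : {v : ℝ | ∃ j, 1 ≤ j ∧ j < n ∧ X j ω = v ∧ X 0 ω ≤ v}.Nonempty
        then sInf {v : ℝ | ∃ j, 1 ≤ j ∧ j < n ∧ X j ω = v ∧ X 0 ω ≤ v}
        else X 0 ω)
        atTop (nhds (X 0 ω)) := by
  have : IsFiniteMeasure ν := hiid 0 ▸ inferInstance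
  have : Countable {a : ℝ | ν {a} ≠ 0} := (countable_setOf_measure_singleton_ne_zero ν).to_subtype
  have hgood : ∀ᵐ ω ∂ℙ, ∀ y, X 0 ω < y → ν (Ico (X 0 ω) y) ≠ 0 :=
    ae_of_ae_map (hX 0).aemeasurable (by rw [hiid 0]; exact ae_measure_Ico_ne_zero ν)
  have hIco := ae_forall_frequently_mem_of_iIndepFun hX hiid hindep
    (s := fun rq : ℚ × ℚ => Ico (rq.1 : ℝ) rq.2) fun _ => measurableSet_Ico
  have hatom := ae_forall_frequently_mem_of_iIndepFun hX hiid hindep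
    (s := fun a : {a : ℝ | ν {a} ≠ 0} => {(a : ℝ)}) fun _ => measurableSet_singleton _
  filter_upwards [hgood, hIco, hatom] with ω hgood hIco hatom
  refine tendsto_rightNearestNeighbor fun b hb => ?_
  obtain ⟨q, hxq, hqb⟩ := exists_rat_btwn hb
  rcases measure_singleton_ne_zero_or_exists_rat_measure_Ico_ne_zero ν (hgood q hxq) with
    h | ⟨r, hxr, hr⟩
  · exact (hatom ⟨_, h⟩ h).mono fun j hj => ⟨ge_of_eq hj, (eq_of_mem_singleton hj).symm ▸ hb⟩
  · exact (hIco (r, q) hr).mono fun j hj => ⟨hxr.le.trans hj.1, hj.2.trans hqb⟩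
end

section
/- Let X₁, ..., Xₙ be i.i.d. real random variables, and for each i let X_{n,i} be the right nearest neighbor of X_i among {X_j : j ≠ i} (the smallest X_j with j ≠ i that is ≥ X_i, with X_{n,i} := X_i if none exists). Then for any measurable function f : ℝ → [0, ∞), E[f(X_{n,1})] ≤ 2 E[f(X₁)]. -/
/-! The right neighbour `x'ᵢ` of `xᵢ` is either `xᵢ` itself or some `xⱼ > xᵢ` with no other point
in `[xᵢ, xⱼ)`, a strict right neighbour. Hence `f(x'ᵢ) ≤ f(xᵢ) + ∑ⱼ 1[xⱼ is the strict right
neighbour of xᵢ] f(xⱼ)`. The law of an i.i.d. vector is exchangeable, so swapping `i` and `j` shows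
that the `j`-th term has the same mean as `1[xᵢ is the strict right neighbour of xⱼ] f(xᵢ)`;
and `xᵢ` is the strict right neighbour of at most one `xⱼ`,
so these terms add up to at most `f(xᵢ)`. -/

open MeasureTheory ProbabilityTheory
open scoped ENNReal

section RightNeighbor

variable {ι : Type*}

open scoped Classical in
noncomputable def rightNeighbor (x : ι → ℝ) (i : ι) : ℝ :=
  if _ : {v : ℝ | ∃ j : ι, j ≠ i ∧ x j = v ∧ x i ≤ v}.Nonempty
  then sInf {v : ℝ | ∃ j : ι, j ≠ i ∧ x j = v ∧ x i ≤ v}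
  else x i

def IsStrictRightNeighbor (x : ι → ℝ) (i j : ι) : Prop :=
  x i < x j ∧ ∀ k, k ≠ i → x i ≤ x k → x j ≤ x k

theorem rightNeighbor_eq_self_or [Finite ι] (x : ι → ℝ) (i : ι) :
    rightNeighbor x i = x i ∨ ∃ j, IsStrictRightNeighbor x i j ∧ rightNeighbor x i = x j := by
  unfold rightNeighbor
  split_ifs with h
  · have hfin : {v : ℝ | ∃ j : ι, j ≠ i ∧ x j = v ∧ x i ≤ v}.Finite :=
      (Set.finite_range x).subset fun v ⟨j, _, hj, _⟩ => ⟨j, hj⟩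
    obtain ⟨j, -, hxj, hij⟩ := h.csInf_mem hfin
    rcases hij.eq_or_lt with heq | hlt
    · exact .inl heq.symm
    · refine .inr ⟨j, ⟨hxj ▸ hlt, fun k hk hik => ?_⟩, hxj.symm⟩
      exact hxj ▸ csInf_le hfin.bddBelow ⟨k, hk, rfl, hik⟩
  · exact .inl rfl

theorem IsStrictRightNeighbor.left_unique {x : ι → ℝ} {i j k : ι}
    (hj : IsStrictRightNeighbor x j i) (hk : IsStrictRightNeighbor x k i) : j = k := by
  by_contra hjk
  rcases le_total (x j) (x k) with h | h
  · exact (hj.2 k (Ne.symm hjk) h).not_gt hk.1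
  · exact (hk.2 j hjk h).not_gt hj.1

theorem isStrictRightNeighbor_comp_perm (x : ι → ℝ) (σ : Equiv.Perm ι) (i j : ι) :
    IsStrictRightNeighbor (x ∘ σ) i j ↔ IsStrictRightNeighbor x (σ i) (σ j) := by
  refine and_congr_right fun _ => Iff.trans ?_ σ.forall_congr_right
  simp only [Function.comp_apply, σ.injective.ne_iff]

theorem measurableSet_isStrictRightNeighbor [Countable ι] (i j : ι) :
    MeasurableSet {x : ι → ℝ | IsStrictRightNeighbor x i j} := by
  unfold IsStrictRightNeighbor
  measurability

variable [Fintype ι]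

theorem apply_rightNeighbor_le (g : ℝ → ℝ≥0∞) (x : ι → ℝ) (i : ι) :
    g (rightNeighbor x i) ≤
      g (x i) + ∑ j, {y | IsStrictRightNeighbor y i j}.indicator (fun y => g (y j)) x := by
  rcases rightNeighbor_eq_self_or x i with h | ⟨j, hj, h⟩
  · rw [h]
    exact le_self_add
  · calc g (rightNeighbor x i)
        = {y | IsStrictRightNeighbor y i j}.indicator (fun y => g (y j)) x := by
          rw [Set.indicator_of_mem (show x ∈ {y | IsStrictRightNeighbor y i j} from hj), h]
      _ ≤ ∑ j, {y | IsStrictRightNeighbor y i j}.indicator (fun y => g (y j)) x :=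
          Finset.single_le_sum
            (f := fun j => {y | IsStrictRightNeighbor y i j}.indicator (fun y => g (y j)) x)
            (fun _ _ => zero_le) (Finset.mem_univ j)
      _ ≤ _ := le_add_self

theorem sum_indicator_isStrictRightNeighbor_le (g : ℝ → ℝ≥0∞) (x : ι → ℝ) (i : ι) :
    ∑ j, {y | IsStrictRightNeighbor y j i}.indicator (fun y => g (y i)) x ≤ g (x i) := by
  by_cases hex : ∃ j, IsStrictRightNeighbor x j i
  · obtain ⟨j, hj⟩ := hex
    rw [Finset.sum_eq_single_of_mem j (Finset.mem_univ j)
      fun k _ hkj => Set.indicator_of_notMem (fun hk => hkj (hk.left_unique hj)) _]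
    exact Set.indicator_le_self _ _ _
  · rw [Finset.sum_eq_zero fun j _ => Set.indicator_of_notMem
      (show x ∉ {y | IsStrictRightNeighbor y j i} from fun hj => hex ⟨j, hj⟩) _]
    exact zero_le

end RightNeighbor

namespace ProbabilityTheory

variable {Ω ι β : Type*} [MeasurableSpace Ω] [MeasurableSpace β] {μ : Measure Ω}

def IsExchangeable (μ : Measure Ω) (Y : Ω → ι → β) : Prop :=
  ∀ σ : Equiv.Perm ι, μ.map (fun ω => Y ω ∘ σ) = μ.map Y

theorem iIndepFun.isExchangeable [Fintype ι] {X : ι → Ω → β} (hX : ∀ i, AEMeasurable (X i) μ)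
    {ν : Measure β} (hν : ∀ i, μ.map (X i) = ν) (hindep : iIndepFun X μ) :
    IsExchangeable μ (fun ω i => X i ω) := by
  have hlaw {Z : ι → Ω → β} (hZ : ∀ i, AEMeasurable (Z i) μ) (hZν : ∀ i, μ.map (Z i) = ν)
      (hZi : iIndepFun Z μ) : μ.map (fun ω i => Z i ω) = Measure.pi fun _ => ν := by
    simp only [hZi.map_fun_eq_pi_map hZ, hZν]
  intro σ
  exact (hlaw (fun i => hX (σ i)) (fun i => hν (σ i)) (hindep.precomp σ.injective)).trans
    (hlaw hX hν hindep).symm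

theorem IsExchangeable.lintegral_comp_perm {Y : Ω → ι → β} (hY : Measurable Y)
    (hexch : IsExchangeable μ Y) (σ : Equiv.Perm ι) {F : (ι → β) → ℝ≥0∞} (hF : Measurable F) :
    ∫⁻ ω, F (Y ω ∘ σ) ∂μ = ∫⁻ ω, F (Y ω) ∂μ := by
  have hYσ : Measurable fun ω => Y ω ∘ σ :=
    measurable_pi_lambda _ fun i => (measurable_pi_apply (σ i)).comp hY
  rw [← lintegral_map hF hYσ, hexch σ, lintegral_map hF hY]

section RightNeighbor

variable [Fintype ι] [DecidableEq ι] {Y : Ω → ι → ℝ} {g : ℝ → ℝ≥0∞}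

theorem IsExchangeable.lintegral_indicator_isStrictRightNeighbor_swap (hY : Measurable Y)
    (hexch : IsExchangeable μ Y) (hg : Measurable g) (i j : ι) :
    ∫⁻ ω, {y | IsStrictRightNeighbor y i j}.indicator (fun y => g (y j)) (Y ω) ∂μ =
      ∫⁻ ω, {y | IsStrictRightNeighbor y j i}.indicator (fun y => g (y i)) (Y ω) ∂μ := by
  have hF : Measurable ({y | IsStrictRightNeighbor y i j}.indicator fun y => g (y j)) :=
    (hg.comp (measurable_pi_apply j)).indicator (measurableSet_isStrictRightNeighbor i j)
  rw [← hexch.lintegral_comp_perm hY (Equiv.swap i j) hF]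
  refine lintegral_congr fun ω => ?_
  have hmem : Y ω ∘ Equiv.swap i j ∈ {y | IsStrictRightNeighbor y i j} ↔
      Y ω ∈ {y | IsStrictRightNeighbor y j i} := by
    simpa using isStrictRightNeighbor_comp_perm (Y ω) (Equiv.swap i j) i j
  by_cases h : Y ω ∈ {y | IsStrictRightNeighbor y j i}
  · simp [Set.indicator_of_mem h, Set.indicator_of_mem (hmem.2 h)]
  · rw [Set.indicator_of_notMem h, Set.indicator_of_notMem (mt hmem.1 h)]

theorem IsExchangeable.lintegral_rightNeighbor_le (hY : Measurable Y) (hexch : IsExchangeable μ Y)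
    (hg : Measurable g) (i : ι) :
    ∫⁻ ω, g (rightNeighbor (Y ω) i) ∂μ ≤ 2 * ∫⁻ ω, g (Y ω i) ∂μ := by
  have hgi : Measurable fun ω => g (Y ω i) := hg.comp ((measurable_pi_apply i).comp hY)
  have hA (j : ι) : Measurable fun ω =>
      {y | IsStrictRightNeighbor y i j}.indicator (fun y => g (y j)) (Y ω) :=
    ((hg.comp (measurable_pi_apply j)).indicator (measurableSet_isStrictRightNeighbor i j)).comp hY
  have hB (j : ι) : Measurable fun ω =>
      {y | IsStrictRightNeighbor y j i}.indicator (fun y => g (y i)) (Y ω) :=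
    ((hg.comp (measurable_pi_apply i)).indicator (measurableSet_isStrictRightNeighbor j i)).comp hY
  calc ∫⁻ ω, g (rightNeighbor (Y ω) i) ∂μ
      ≤ ∫⁻ ω, (g (Y ω i) +
          ∑ j, {y | IsStrictRightNeighbor y i j}.indicator (fun y => g (y j)) (Y ω)) ∂μ :=
        lintegral_mono fun ω => apply_rightNeighbor_le g (Y ω) i
    _ = ∫⁻ ω, g (Y ω i) ∂μ +
          ∑ j, ∫⁻ ω, {y | IsStrictRightNeighbor y j i}.indicator (fun y => g (y i)) (Y ω) ∂μ := by
        rw [lintegral_add_left hgi, lintegral_finsetSum _ fun j _ => hA j]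
        simp only [hexch.lintegral_indicator_isStrictRightNeighbor_swap hY hg]
    _ ≤ ∫⁻ ω, g (Y ω i) ∂μ + ∫⁻ ω, g (Y ω i) ∂μ := by
        rw [← lintegral_finsetSum _ fun j _ => hB j]
        gcongr with ω
        exact sum_indicator_isStrictRightNeighbor_le g (Y ω) i
    _ = 2 * ∫⁻ ω, g (Y ω i) ∂μ := (two_mul _).symm

end RightNeighbor

end ProbabilityTheory

open scoped Classical in
theorem stmt_11_general {Ω : Type*} [MeasureSpace Ω]
    (n : ℕ) (X : Fin n → Ω → ℝ) (hX : ∀ i, Measurable (X i))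
    (ν : Measure ℝ) (hiid : ∀ i, Measure.map (X i) ℙ = ν)
    (hindep : iIndepFun X ℙ)
    (f : ℝ → ℝ) (hf : Measurable f)
    (i₀ : Fin n) :
    (∫⁻ ω, ENNReal.ofReal (f
        (if h : {v : ℝ | ∃ j : Fin n, j ≠ i₀ ∧ X j ω = v ∧ X i₀ ω ≤ v}.Nonempty
         then sInf {v : ℝ | ∃ j : Fin n, j ≠ i₀ ∧ X j ω = v ∧ X i₀ ω ≤ v}
         else X i₀ ω)) ∂(ℙ : Measure Ω))
      ≤ 2 * ∫⁻ ω, ENNReal.ofReal (f (X i₀ ω)) ∂(ℙ : Measure Ω) :=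
  (hindep.isExchangeable (fun i => (hX i).aemeasurable) hiid).lintegral_rightNeighbor_le
    (measurable_pi_lambda _ hX) hf.ennreal_ofReal i₀

open scoped Classical in
/-- For i.i.d. `X 0, …, X (n-1)` with `n ≥ 2`, if `X' i` denotes the right nearest
neighbor of `X i` among the other `X j`'s (equal to `X i` if none exists), then
for any measurable `f : ℝ → [0,∞)`, `E[f(X' 0)] ≤ 2 E[f(X 0)]`. -/
theorem stmt_11 {Ω : Type*} [MeasureSpace Ω] [IsProbabilityMeasure (ℙ : Measure Ω)]
    (n : ℕ) (hn : 2 ≤ n) (X : Fin n → Ω → ℝ) (hX : ∀ i, Measurable (X i))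
    (ν : Measure ℝ) (hiid : ∀ i, Measure.map (X i) ℙ = ν)
    (hindep : iIndepFun X ℙ)
    (f : ℝ → ℝ) (hf : Measurable f) (hf0 : ∀ x, 0 ≤ f x)
    (i₀ : Fin n) (hi₀ : (i₀ : ℕ) = 0) :
    (∫⁻ ω, ENNReal.ofReal (f
        (if h : {v : ℝ | ∃ j : Fin n, j ≠ i₀ ∧ X j ω = v ∧ X i₀ ω ≤ v}.Nonempty
         then sInf {v : ℝ | ∃ j : Fin n, j ≠ i₀ ∧ X j ω = v ∧ X i₀ ω ≤ v}
         else X i₀ ω)) ∂(ℙ : Measure Ω))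
      ≤ 2 * ∫⁻ ω, ENNReal.ofReal (f (X i₀ ω)) ∂(ℙ : Measure Ω) :=
  stmt_11_general n X hX ν hiid hindep f hf i₀
end

section
/- Let X ~ Bernoulli(p) and Z ~ Bernoulli(p') be independent random variables with 0 < p < 1 and 0 < p' ≤ 1, and set Y = XZ. Then ξ(X,Y) = p'(1-p)/(1 - pp'), where ξ(X,Y) = (∫ Var(E[1_{Y ≥ t} | X]) dμ(t)) / (∫ Var(1_{Y ≥ t}) dμ(t)) and μ is the law of Y. -/
/-!
Almost surely `X, Z ∈ {0, 1}`, so `Y = XZ` is `{0, 1}`-valued and both integrals against its law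
are sums over the two atoms. At `t = 0` both integrands vanish, since `𝟙{Y ≥ 0} = 1` a.s. At
`t = 1`, `𝟙{Y ≥ 1} = 𝟙{X = 1} 𝟙{Z = 1}`, whose conditional expectation given `X` is
`p' 𝟙{X = 1}` by independence. The two variances are therefore `p'² p (1 - p)` and
`pp' (1 - pp')`, and the common weight `P(Y = 1) = pp'` cancels.
-/

open MeasureTheory ProbabilityTheory

lemma integral_eq_sum_of_ae_mem_finset {α E : Type*} [MeasurableSpace α]
    [MeasurableSingletonClass α] [NormedAddCommGroup E] [NormedSpace ℝ E]
    [CompleteSpace E] {ν : Measure α} [IsFiniteMeasure ν] {s : Finset α}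
    (h : ∀ᵐ x ∂ν, x ∈ s) (g : α → E) :
    ∫ x, g x ∂ν = ∑ x ∈ s, ν.real {x} • g x := by
  rw [← setIntegral_finset s, Measure.restrict_eq_self_of_ae_mem h]
  exact IntegrableOn.finset

section

variable {Ω : Type*} [MeasurableSpace Ω] {μ : Measure Ω}

lemma ae_eq_zero_or_eq_one_of_measure_eq [IsProbabilityMeasure μ] {X : Ω → ℝ}
    (hX : Measurable X) {p : ℝ} (h1 : μ {ω | X ω = 1} = ENNReal.ofReal p)
    (h0 : μ {ω | X ω = 0} = ENNReal.ofReal (1 - p)) :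
    ∀ᵐ ω ∂μ, X ω = 0 ∨ X ω = 1 := by
  have hdisj : Disjoint {ω | X ω = 0} {ω | X ω = 1} :=
    Set.disjoint_left.2 fun ω h0 h1 => zero_ne_one (h0.symm.trans h1)
  have hunion : μ ({ω | X ω = 0} ∪ {ω | X ω = 1}) = 1 := by
    refine le_antisymm prob_le_one ?_
    calc (1 : ENNReal) = ENNReal.ofReal (1 - p + p) := by simp
      _ ≤ ENNReal.ofReal (1 - p) + ENNReal.ofReal p := ENNReal.ofReal_add_le
      _ = μ ({ω | X ω = 0} ∪ {ω | X ω = 1}) := by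
        rw [measure_union hdisj (hX (measurableSet_singleton 1)), h0, h1]
  exact mem_ae_iff.2 <|
    (prob_compl_eq_zero_iff ((hX (measurableSet_singleton 0)).union
      (hX (measurableSet_singleton 1)))).2 hunion

lemma variance_indicator_one [IsProbabilityMeasure μ] {A : Set Ω} (hA : MeasurableSet A) :
    variance (A.indicator 1) μ = μ.real A * (1 - μ.real A) := by
  have hsq : A.indicator (1 : Ω → ℝ) ^ 2 = A.indicator 1 := by
    ext ω; by_cases h : ω ∈ A <;> simp [h]
  have hmem : MemLp (A.indicator (1 : Ω → ℝ)) 2 μ :=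
    memLp_indicator_const 2 hA 1 (.inr (measure_ne_top _ _))
  rw [variance_eq_sub hmem, hsq, integral_indicator_one hA]
  ring

lemma variance_const [IsProbabilityMeasure μ] (c : ℝ) : variance (fun _ => c) μ = 0 := by
  simp [variance_eq_integral aemeasurable_const]

lemma condExp_indicator_inter_preimage_of_indepFun [IsFiniteMeasure μ]
    {β γ : Type*} [MeasurableSpace β] [MeasurableSpace γ] {X : Ω → β} {Z : Ω → γ}
    (hX : Measurable X) (hZ : Measurable Z) (hindep : IndepFun X Z μ)
    {A : Set β} {B : Set γ} (hA : MeasurableSet A) (hB : MeasurableSet B) :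
    μ[(X ⁻¹' A ∩ Z ⁻¹' B).indicator (1 : Ω → ℝ) | MeasurableSpace.comap X inferInstance]
      =ᵐ[μ] μ.real (Z ⁻¹' B) • (X ⁻¹' A).indicator 1 := by
  have hZB : μ[(Z ⁻¹' B).indicator (1 : Ω → ℝ) | MeasurableSpace.comap X inferInstance]
      =ᵐ[μ] fun _ => μ.real (Z ⁻¹' B) := by
    refine (condExp_indep_eq hZ.comap_le hX.comap_le ?_
      ((IndepFun_iff_Indep Z X μ).1 hindep.symm)).trans ?_
    · exact stronglyMeasurable_const.indicator ⟨B, hB, rfl⟩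
    · rw [integral_indicator_one (hZ hB)]
  rw [← Set.indicator_indicator]
  have hXA : MeasurableSet[MeasurableSpace.comap X inferInstance] (X ⁻¹' A) := ⟨A, hA, rfl⟩
  have hint : Integrable ((Z ⁻¹' B).indicator (1 : Ω → ℝ)) μ :=
    (integrable_const 1).indicator (hZ hB)
  filter_upwards [condExp_indicator hint hXA, hZB] with ω hω hωB
  rw [hω]
  by_cases h : ω ∈ X ⁻¹' A <;> simp [h, hωB]

lemma variance_condExp_indicator_inter_preimage_of_indepFun [IsProbabilityMeasure μ]
    {β γ : Type*} [MeasurableSpace β] [MeasurableSpace γ] {X : Ω → β} {Z : Ω → γ}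
    (hX : Measurable X) (hZ : Measurable Z) (hindep : IndepFun X Z μ)
    {A : Set β} {B : Set γ} (hA : MeasurableSet A) (hB : MeasurableSet B) :
    variance (μ[(X ⁻¹' A ∩ Z ⁻¹' B).indicator (1 : Ω → ℝ)
        | MeasurableSpace.comap X inferInstance]) μ
      = μ.real (Z ⁻¹' B) ^ 2 * (μ.real (X ⁻¹' A) * (1 - μ.real (X ⁻¹' A))) := by
  rw [variance_congr (condExp_indicator_inter_preimage_of_indepFun hX hZ hindep hA hB),
    variance_smul, variance_indicator_one (hX hA)]

section ZeroOneValued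

variable {X Z : Ω → ℝ}

lemma ite_zero_le_mul_ae_eq_one (hX : ∀ᵐ ω ∂μ, X ω = 0 ∨ X ω = 1)
    (hZ : ∀ᵐ ω ∂μ, Z ω = 0 ∨ Z ω = 1) :
    (fun ω => if 0 ≤ X ω * Z ω then (1 : ℝ) else 0) =ᵐ[μ] fun _ => 1 := by
  filter_upwards [hX, hZ] with ω hx hz
  rcases hx with hx | hx <;> rcases hz with hz | hz <;> simp [hx, hz]

lemma ite_one_le_mul_ae_eq_indicator (hX : ∀ᵐ ω ∂μ, X ω = 0 ∨ X ω = 1)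
    (hZ : ∀ᵐ ω ∂μ, Z ω = 0 ∨ Z ω = 1) :
    (fun ω => if 1 ≤ X ω * Z ω then (1 : ℝ) else 0)
      =ᵐ[μ] (X ⁻¹' {1} ∩ Z ⁻¹' {1}).indicator 1 := by
  filter_upwards [hX, hZ] with ω hx hz
  rcases hx with hx | hx <;> rcases hz with hz | hz <;> simp [hx, hz]

lemma mul_preimage_one_ae_eq (hX : ∀ᵐ ω ∂μ, X ω = 0 ∨ X ω = 1)
    (hZ : ∀ᵐ ω ∂μ, Z ω = 0 ∨ Z ω = 1) :
    (fun ω => X ω * Z ω) ⁻¹' {1} =ᵐ[μ] (X ⁻¹' {1} ∩ Z ⁻¹' {1} : Set Ω) := by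
  refine Filter.eventuallyEq_set.2 ?_
  filter_upwards [hX, hZ] with ω hx hz
  rcases hx with hx | hx <;> rcases hz with hz | hz <;> simp [hx, hz]

lemma ae_map_mul_mem_zero_one (hXm : Measurable X) (hZm : Measurable Z)
    (hX : ∀ᵐ ω ∂μ, X ω = 0 ∨ X ω = 1) (hZ : ∀ᵐ ω ∂μ, Z ω = 0 ∨ Z ω = 1) :
    ∀ᵐ t ∂(μ.map fun ω => X ω * Z ω), t ∈ ({0, 1} : Finset ℝ) := by
  refine (ae_map_iff (p := (· ∈ ({0, 1} : Finset ℝ))) (hXm.fun_mul hZm).aemeasurable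
    ({0, 1} : Finset ℝ).measurableSet).2 ?_
  filter_upwards [hX, hZ] with ω hx hz
  rcases hx with hx | hx <;> rcases hz with hz | hz <;> simp [hx, hz]

end ZeroOneValued

end

/-- If `X ~ Bernoulli(p)` and `Z ~ Bernoulli(p')` are independent, `0 < p < 1`,
`0 < p' ≤ 1`, and `Y = X * Z`, then `ξ(X,Y) = p'(1-p)/(1-pp')`. -/
theorem stmt_14 {Ω : Type*} [MeasureSpace Ω] [IsProbabilityMeasure (ℙ : Measure Ω)]
    (X Z : Ω → ℝ) (hX : Measurable X) (hZ : Measurable Z)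
    (p p' : ℝ) (hp0 : 0 < p) (hp1 : p < 1) (hp'0 : 0 < p') (hp'1 : p' ≤ 1)
    (hXlaw1 : ℙ {ω | X ω = 1} = ENNReal.ofReal p)
    (hXlaw0 : ℙ {ω | X ω = 0} = ENNReal.ofReal (1 - p))
    (hZlaw1 : ℙ {ω | Z ω = 1} = ENNReal.ofReal p')
    (hZlaw0 : ℙ {ω | Z ω = 0} = ENNReal.ofReal (1 - p'))
    (hindep : IndepFun X Z ℙ)
    (Y : Ω → ℝ) (hY : Y = fun ω => X ω * Z ω) :
    (∫ t, variance (ℙ[fun ω => if t ≤ Y ω then (1 : ℝ) else 0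
            | MeasurableSpace.comap X inferInstance]) ℙ ∂(Measure.map Y ℙ))
        / (∫ t, variance (fun ω => if t ≤ Y ω then (1 : ℝ) else 0) ℙ
            ∂(Measure.map Y ℙ))
      = p' * (1 - p) / (1 - p * p') := by
  subst hY
  have hX01 := ae_eq_zero_or_eq_one_of_measure_eq hX hXlaw1 hXlaw0
  have hZ01 := ae_eq_zero_or_eq_one_of_measure_eq hZ hZlaw1 hZlaw0
  have hX1 : Measure.real ℙ (X ⁻¹' {1}) = p :=
    (congrArg ENNReal.toReal hXlaw1).trans (ENNReal.toReal_ofReal hp0.le)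
  have hZ1 : Measure.real ℙ (Z ⁻¹' {1}) = p' :=
    (congrArg ENNReal.toReal hZlaw1).trans (ENNReal.toReal_ofReal hp'0.le)
  have hXZ1 : Measure.real ℙ (X ⁻¹' {1} ∩ Z ⁻¹' {1}) = p * p' := by
    rw [measureReal_def, hindep.measure_inter_preimage_eq_mul _ _ (measurableSet_singleton 1)
      (measurableSet_singleton 1), ENNReal.toReal_mul, ← measureReal_def, ← measureReal_def,
      hX1, hZ1]
  have hY1 : (Measure.map (fun ω => X ω * Z ω) ℙ).real {1} = p * p' := by
    rw [map_measureReal_apply (hX.fun_mul hZ) (measurableSet_singleton 1),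
      measureReal_congr (mul_preimage_one_ae_eq hX01 hZ01), hXZ1]
  have hge0 := ite_zero_le_mul_ae_eq_one hX01 hZ01
  have hge1 := ite_one_le_mul_ae_eq_indicator hX01 hZ01
  have hY01 := ae_map_mul_mem_zero_one hX hZ hX01 hZ01
  simp only [integral_eq_sum_of_ae_mem_finset hY01, Finset.sum_pair zero_ne_one]
  rw [variance_congr (condExp_congr_ae hge0), condExp_const hX.comap_le, variance_const,
    variance_congr hge0, variance_const, variance_congr (condExp_congr_ae hge1),
    variance_condExp_indicator_inter_preimage_of_indepFun hX hZ hindep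
      (measurableSet_singleton 1) (measurableSet_singleton 1),
    variance_congr hge1, variance_indicator_one ((hX (measurableSet_singleton 1)).inter
      (hZ (measurableSet_singleton 1))), hXZ1, hX1, hZ1, hY1]
  have hq : p * p' ≠ 0 := by positivity
  have hq1 : 1 - p * p' ≠ 0 := by nlinarith
  simp only [smul_eq_mul, mul_zero, zero_add]
  field_simp
end

section
/- Let Y be a nonconstant real random variable with CDF F, let Y₁, Y₂, Y₃ be i.i.d. copies of Y, and φ(y,y') = min{F(y), F(y')}. Then E[φ(Y₁,Y₂)²] - 2E[φ(Y₁,Y₂)φ(Y₁,Y₃)] + (E[φ(Y₁,Y₂)])² > 0. -/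
/-!
Write `ψ(y) = E[φ(y, Y₂)]` and `m = E[φ(Y₁, Y₂)] = E[ψ(Y₁)]`. By independence and symmetry of `φ`,
the quantity is `E[(φ(Y₁,Y₂) - ψ(Y₁) - ψ(Y₂) + m)²]` (Hoeffding's decomposition), so it is
nonnegative, and if it vanished then `min (F y) (F y') = u y + u y'` for almost every pair.
Comparing four points, two with `F ≤ r` and two with `F > r`, shows this is impossible as soon as
`F(Y)` is not almost surely constant. Finally, `P(F(Y) ≤ F(t)) = F(t)`, so any `t` with
`0 < F(t) < 1`, which exists because `Y` is not almost surely constant, gives such a threshold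
`r = F(t)`.
-/

open MeasureTheory ProbabilityTheory Set Function
open scoped ENNReal

lemma integral_comp_of_map_eq {Ω β E : Type*} [MeasurableSpace Ω] [MeasurableSpace β]
    [NormedAddCommGroup E] [NormedSpace ℝ E] {P : Measure Ω} {ν : Measure β} {X : Ω → β}
    {f : β → E} (hX : AEMeasurable X P)
    (hmap : P.map X = ν) (hf : AEStronglyMeasurable f ν) :
    ∫ ω, f (X ω) ∂P = ∫ x, f x ∂ν := by
  subst hmap
  exact (integral_map hX hf).symm

lemma integral_sub_sub_add_sq {β : Type*} [MeasurableSpace β] {ν : Measure β}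
    [IsProbabilityMeasure ν] {a b c : β → ℝ} (ha : MemLp a 2 ν) (hb : MemLp b 2 ν)
    (hc : MemLp c 2 ν) (m : ℝ) :
    ∫ x, (a x - b x - c x + m) ^ 2 ∂ν
      = ∫ x, a x ^ 2 ∂ν - 2 * ∫ x, a x * b x ∂ν - 2 * ∫ x, a x * c x ∂ν + 2 * m * ∫ x, a x ∂ν
        + ∫ x, b x ^ 2 ∂ν + ∫ x, c x ^ 2 ∂ν + 2 * ∫ x, b x * c x ∂ν
        - 2 * m * ∫ x, b x ∂ν - 2 * m * ∫ x, c x ∂ν + m ^ 2 := by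
  have hab : Integrable (fun x => a x * b x) ν := ha.integrable_mul hb
  have hac : Integrable (fun x => a x * c x) ν := ha.integrable_mul hc
  have hbc : Integrable (fun x => b x * c x) ν := hb.integrable_mul hc
  have haa := ha.integrable_sq
  have hbb := hb.integrable_sq
  have hcc := hc.integrable_sq
  have ia := ha.integrable one_le_two
  have ib := hb.integrable one_le_two
  have ic := hc.integrable one_le_two
  have hexpand : ∀ x, (a x - b x - c x + m) ^ 2
      = a x ^ 2 - 2 * (a x * b x) - 2 * (a x * c x) + 2 * m * a x
        + b x ^ 2 + c x ^ 2 + 2 * (b x * c x) - 2 * m * b x - 2 * m * c x + m ^ 2 :=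
    fun x => by ring
  simp (disch := fun_prop) only [hexpand, integral_add, integral_sub, integral_const_mul,
    integral_const, probReal_univ, one_smul]

section Hoeffding

variable {α : Type*} [MeasurableSpace α] {μ : Measure α} {φ : α → α → ℝ} {C : ℝ}

noncomputable def hoeffdingProj (μ : Measure α) (φ : α → α → ℝ) (x : α) : ℝ := ∫ y, φ x y ∂μ

lemma measurable_hoeffdingProj [SFinite μ] (hφ : Measurable (uncurry φ)) :
    Measurable (hoeffdingProj μ φ) :=
  hφ.stronglyMeasurable.integral_prod_right'.measurable

variable [IsProbabilityMeasure μ]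

lemma norm_hoeffdingProj_le (hC : ∀ x y, ‖φ x y‖ ≤ C) (x : α) : ‖hoeffdingProj μ φ x‖ ≤ C := by
  simpa [hoeffdingProj] using
    norm_integral_le_of_norm_le_const (μ := μ) (f := φ x) (.of_forall (hC x))

lemma integral_prod_eq_integral_hoeffdingProj (hφ : Measurable (uncurry φ))
    (hC : ∀ x y, ‖φ x y‖ ≤ C) :
    ∫ p, φ p.1 p.2 ∂μ.prod μ = ∫ x, hoeffdingProj μ φ x ∂μ :=
  integral_prod _ (.of_bound hφ.aestronglyMeasurable C (.of_forall fun p => hC p.1 p.2))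

lemma integral_prod_mul_eq_integral_hoeffdingProj_sq (hφ : Measurable (uncurry φ))
    (hC : ∀ x y, ‖φ x y‖ ≤ C) :
    ∫ q, φ q.1 q.2.1 * φ q.1 q.2.2 ∂μ.prod (μ.prod μ) = ∫ x, hoeffdingProj μ φ x ^ 2 ∂μ := by
  have h₁ : MemLp (fun q : α × α × α => φ q.1 q.2.1) 2 (μ.prod (μ.prod μ)) :=
    .of_bound (hφ.comp (measurable_fst.prodMk measurable_snd.fst)).aestronglyMeasurable C
      (.of_forall fun q => hC q.1 q.2.1)
  have h₂ : MemLp (fun q : α × α × α => φ q.1 q.2.2) 2 (μ.prod (μ.prod μ)) :=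
    .of_bound (hφ.comp (measurable_fst.prodMk measurable_snd.snd)).aestronglyMeasurable C
      (.of_forall fun q => hC q.1 q.2.2)
  rw [integral_prod (fun q : α × α × α => φ q.1 q.2.1 * φ q.1 q.2.2) (h₁.integrable_mul h₂)]
  simp only [integral_prod_mul, hoeffdingProj, sq]

noncomputable def hoeffdingResidual (μ : Measure α) (φ : α → α → ℝ) (p : α × α) : ℝ :=
  φ p.1 p.2 - hoeffdingProj μ φ p.1 - hoeffdingProj μ φ p.2 + ∫ x, hoeffdingProj μ φ x ∂μ

lemma memLp_kernel_and_hoeffdingProj (hφ : Measurable (uncurry φ)) (hC : ∀ x y, ‖φ x y‖ ≤ C) :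
    MemLp (fun p : α × α => φ p.1 p.2) 2 (μ.prod μ)
      ∧ MemLp (fun p : α × α => hoeffdingProj μ φ p.1) 2 (μ.prod μ)
      ∧ MemLp (fun p : α × α => hoeffdingProj μ φ p.2) 2 (μ.prod μ) := by
  have hψ := measurable_hoeffdingProj (μ := μ) hφ
  refine ⟨.of_bound hφ.aestronglyMeasurable C (.of_forall fun p => hC p.1 p.2), ?_, ?_⟩
  · exact .of_bound (hψ.comp measurable_fst).aestronglyMeasurable C
      (.of_forall fun p => norm_hoeffdingProj_le hC p.1)
  · exact .of_bound (hψ.comp measurable_snd).aestronglyMeasurable C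
      (.of_forall fun p => norm_hoeffdingProj_le hC p.2)

lemma memLp_hoeffdingResidual (hφ : Measurable (uncurry φ)) (hC : ∀ x y, ‖φ x y‖ ≤ C) :
    MemLp (hoeffdingResidual μ φ) 2 (μ.prod μ) :=
  let ⟨ha, hb, hc⟩ := memLp_kernel_and_hoeffdingProj (μ := μ) hφ hC
  ((ha.sub hb).sub hc).add (memLp_const _)

theorem integral_hoeffdingResidual_sq (hφ : Measurable (uncurry φ)) (hC : ∀ x y, ‖φ x y‖ ≤ C)
    (hsymm : ∀ x y, φ x y = φ y x) :
    ∫ p, hoeffdingResidual μ φ p ^ 2 ∂μ.prod μ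
      = ∫ p, φ p.1 p.2 ^ 2 ∂μ.prod μ - 2 * ∫ x, hoeffdingProj μ φ x ^ 2 ∂μ
        + (∫ x, hoeffdingProj μ φ x ∂μ) ^ 2 := by
  obtain ⟨ha, hb, hc⟩ := memLp_kernel_and_hoeffdingProj (μ := μ) hφ hC
  have hab : ∫ p, φ p.1 p.2 * hoeffdingProj μ φ p.1 ∂μ.prod μ
      = ∫ x, hoeffdingProj μ φ x ^ 2 ∂μ := by
    rw [integral_prod (fun p : α × α => φ p.1 p.2 * hoeffdingProj μ φ p.1)
      (ha.integrable_mul hb)]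
    simp only [integral_mul_const, hoeffdingProj, sq]
  have hac : ∫ p, φ p.1 p.2 * hoeffdingProj μ φ p.2 ∂μ.prod μ
      = ∫ x, hoeffdingProj μ φ x ^ 2 ∂μ := by
    rw [← hab, ← integral_prod_swap]
    simp only [Prod.fst_swap, Prod.snd_swap, hsymm _ _]
  simp only [hoeffdingResidual]
  rw [integral_sub_sub_add_sq ha hb hc, hab, hac, integral_prod_mul,
    integral_prod_eq_integral_hoeffdingProj hφ hC,
    integral_fun_fst (fun x => hoeffdingProj μ φ x ^ 2),
    integral_fun_snd (fun x => hoeffdingProj μ φ x ^ 2)]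
  simp only [integral_fun_fst, integral_fun_snd, probReal_univ, one_smul]
  ring

end Hoeffding

namespace ProbabilityTheory.iIndepFun

variable {Ω ι α : Type*} [MeasurableSpace Ω] [MeasurableSpace α] {P : Measure Ω}
  [IsFiniteMeasure P] {Y : ι → Ω → α} {μ : Measure α}

lemma map_prodMk_eq_prod (h : iIndepFun Y P) (hY : ∀ i, Measurable (Y i))
    (hlaw : ∀ i, P.map (Y i) = μ) {i j : ι} (hij : i ≠ j) :
    P.map (fun ω => (Y i ω, Y j ω)) = μ.prod μ := by
  rw [(indepFun_iff_map_prod_eq_prod_map_map (hY i).aemeasurable (hY j).aemeasurable).1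
    (h.indepFun hij), hlaw, hlaw]

lemma map_prodMk_prodMk_eq_prod (h : iIndepFun Y P) (hY : ∀ i, Measurable (Y i))
    (hlaw : ∀ i, P.map (Y i) = μ) {i j k : ι} (hij : i ≠ j) (hik : i ≠ k) (hjk : j ≠ k) :
    P.map (fun ω => (Y i ω, Y j ω, Y k ω)) = μ.prod (μ.prod μ) := by
  rw [(indepFun_iff_map_prod_eq_prod_map_map (hY i).aemeasurable
    ((hY j).prodMk (hY k)).aemeasurable).1 (h.indepFun_prodMk hY j k i hij.symm hik.symm).symm,
    hlaw, h.map_prodMk_eq_prod hY hlaw hjk]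

theorem integral_kernel_eq_integral_hoeffdingResidual_sq [IsProbabilityMeasure μ]
    {φ : α → α → ℝ} {C : ℝ} (h : iIndepFun Y P) (hY : ∀ i, Measurable (Y i))
    (hlaw : ∀ i, P.map (Y i) = μ) {i j k : ι} (hij : i ≠ j) (hik : i ≠ k) (hjk : j ≠ k)
    (hφ : Measurable (uncurry φ)) (hC : ∀ x y, ‖φ x y‖ ≤ C) (hsymm : ∀ x y, φ x y = φ y x) :
    ∫ ω, φ (Y i ω) (Y j ω) ^ 2 ∂P - 2 * ∫ ω, φ (Y i ω) (Y j ω) * φ (Y i ω) (Y k ω) ∂P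
        + (∫ ω, φ (Y i ω) (Y j ω) ∂P) ^ 2
      = ∫ p, hoeffdingResidual μ φ p ^ 2 ∂μ.prod μ := by
  have hpair := h.map_prodMk_eq_prod hY hlaw hij
  have e₁ : ∫ ω, φ (Y i ω) (Y j ω) ^ 2 ∂P = ∫ p, φ p.1 p.2 ^ 2 ∂μ.prod μ :=
    integral_comp_of_map_eq (f := fun p : α × α => φ p.1 p.2 ^ 2)
      ((hY i).prodMk (hY j)).aemeasurable hpair (hφ.pow_const 2).aestronglyMeasurable
  have e₂ : ∫ ω, φ (Y i ω) (Y j ω) * φ (Y i ω) (Y k ω) ∂P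
      = ∫ q, φ q.1 q.2.1 * φ q.1 q.2.2 ∂μ.prod (μ.prod μ) :=
    integral_comp_of_map_eq (f := fun q : α × α × α => φ q.1 q.2.1 * φ q.1 q.2.2)
      ((hY i).prodMk ((hY j).prodMk (hY k))).aemeasurable
      (h.map_prodMk_prodMk_eq_prod hY hlaw hij hik hjk)
      ((hφ.comp (measurable_fst.prodMk measurable_snd.fst)).mul
        (hφ.comp (measurable_fst.prodMk measurable_snd.snd))).aestronglyMeasurable
  have e₃ : ∫ ω, φ (Y i ω) (Y j ω) ∂P = ∫ p, φ p.1 p.2 ∂μ.prod μ :=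
    integral_comp_of_map_eq (f := fun p : α × α => φ p.1 p.2)
      ((hY i).prodMk (hY j)).aemeasurable hpair hφ.aestronglyMeasurable
  rw [e₁, e₂, e₃, integral_prod_mul_eq_integral_hoeffdingProj_sq hφ hC,
    integral_prod_eq_integral_hoeffdingProj hφ hC, integral_hoeffdingResidual_sq hφ hC hsymm]

end ProbabilityTheory.iIndepFun

lemma not_ae_min_eq_add {α : Type*} [MeasurableSpace α] {μ : Measure α} [SFinite μ]
    {f u v : α → ℝ} {r : ℝ} (hA : μ {x | f x ≤ r} ≠ 0) (hB : μ {x | r < f x} ≠ 0) :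
    ¬ ∀ᵐ p ∂μ.prod μ, min (f p.1) (f p.2) = u p.1 + v p.2 := by
  intro h
  have hsec := Measure.ae_ae_of_ae_prod h
  obtain ⟨a₁, ha₁, hsec_a₁⟩ :=
    Measure.exists_mem_of_measure_ne_zero_of_ae hA (ae_restrict_of_ae hsec)
  obtain ⟨b₁, hb₁, hsec_b₁⟩ :=
    Measure.exists_mem_of_measure_ne_zero_of_ae hB (ae_restrict_of_ae hsec)
  obtain ⟨a₂, ha₂, haa, hba⟩ :=
    Measure.exists_mem_of_measure_ne_zero_of_ae hA (ae_restrict_of_ae (hsec_a₁.and hsec_b₁))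
  obtain ⟨b₂, hb₂, hab, hbb⟩ :=
    Measure.exists_mem_of_measure_ne_zero_of_ae hB (ae_restrict_of_ae (hsec_a₁.and hsec_b₁))
  simp only [mem_ofPred_eq] at ha₁ ha₂ hb₁ hb₂
  rw [min_eq_right (ha₂.trans hb₁.le)] at hba
  rw [min_eq_left (ha₁.trans hb₂.le)] at hab
  -- `min (f a₁) (f a₂) + min (f b₁) (f b₂) = f a₁ + f a₂ = min (f a₁) (f a₂) + max (f a₁) (f a₂)`
  have := min_add_max (f a₁) (f a₂)
  linarith [lt_min hb₁ hb₂, max_le ha₁ ha₂]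

theorem integral_hoeffdingResidual_sq_pos_of_eq_min {α : Type*} [MeasurableSpace α]
    {μ : Measure α} [IsProbabilityMeasure μ] {φ : α → α → ℝ} {f : α → ℝ} {C r : ℝ}
    (hφ : Measurable (uncurry φ)) (hC : ∀ x y, ‖φ x y‖ ≤ C)
    (hmin : ∀ x y, φ x y = min (f x) (f y))
    (hA : μ {x | f x ≤ r} ≠ 0) (hB : μ {x | r < f x} ≠ 0) :
    0 < ∫ p, hoeffdingResidual μ φ p ^ 2 ∂μ.prod μ := by
  refine (integral_nonneg fun p => sq_nonneg _).lt_of_ne' fun h0 => ?_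
  have hres : ∀ᵐ p ∂μ.prod μ, hoeffdingResidual μ φ p = 0 := by
    filter_upwards [(integral_eq_zero_iff_of_nonneg (fun p => sq_nonneg _)
      (memLp_hoeffdingResidual hφ hC).integrable_sq).1 h0] with p hp
    exact pow_eq_zero_iff two_ne_zero |>.1 hp
  refine not_ae_min_eq_add hA hB (u := fun x => hoeffdingProj μ φ x - ∫ x, hoeffdingProj μ φ x ∂μ)
    (v := hoeffdingProj μ φ) ?_
  filter_upwards [hres] with p hp
  rw [← hmin]
  simp only [hoeffdingResidual] at hp
  linarith

lemma exists_measure_le_ne_zero_and_measure_lt_ne_zero {α : Type*} [MeasurableSpace α]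
    {μ : Measure α} {f : α → ℝ} (h : ¬ ∃ c, f =ᵐ[μ] fun _ => c) :
    ∃ r, μ {x | f x ≤ r} ≠ 0 ∧ μ {x | r < f x} ≠ 0 := by
  contrapose! h
  refine Filter.exists_eventuallyEq_const_of_forall_separating (· ∈ range (Iic : ℝ → Set ℝ)) ?_
  rintro _ ⟨r, rfl⟩
  by_cases hr : μ {x | f x ≤ r} = 0
  · exact .inr (measure_eq_zero_iff_ae_notMem.1 hr)
  · exact .inl (ae_iff.2 (by simpa only [mem_Iic, not_le] using h r hr))

lemma measure_le_of_forall_measure_Iic_le (μ : Measure ℝ) {s : Set ℝ} {c : ℝ≥0∞}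
    (h : ∀ y ∈ s, μ (Iic y) ≤ c) : μ s ≤ c := by
  by_cases hmax : ∃ y, IsGreatest s y
  · obtain ⟨y, hys, hy⟩ := hmax
    exact (measure_mono fun x hx => hy hx).trans (h y hys)
  push Not at hmax
  -- Without a greatest element, `s` is covered by the countably many `Iic q`, `q` rational below
  -- some point of `s`, and these form a chain.
  set T := {q : ℚ | ∃ y ∈ s, (q : ℝ) ≤ y}
  have hcover : s ⊆ ⋃ q ∈ T, Iic (q : ℝ) := by
    intro x hx
    obtain ⟨y, hy, hxy⟩ : ∃ y ∈ s, x < y := by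
      simpa [IsGreatest, upperBounds, hx] using hmax x
    obtain ⟨q, hxq, hqy⟩ := exists_rat_btwn hxy
    exact mem_biUnion ⟨y, hy, hqy.le⟩ hxq.le
  have hdir : DirectedOn ((· ⊆ ·) on fun q : ℚ => Iic (q : ℝ)) T := by
    intro q₁ h₁ q₂ h₂
    rcases le_total q₁ q₂ with hq | hq
    · exact ⟨q₂, h₂, Iic_subset_Iic.2 (by exact_mod_cast hq), subset_rfl⟩
    · exact ⟨q₁, h₁, subset_rfl, Iic_subset_Iic.2 (by exact_mod_cast hq)⟩
  calc μ s ≤ μ (⋃ q ∈ T, Iic (q : ℝ)) := measure_mono hcover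
    _ = ⨆ q ∈ T, μ (Iic (q : ℝ)) := measure_biUnion_eq_iSup T.to_countable hdir
    _ ≤ c := iSup₂_le fun q ⟨y, hy, hqy⟩ => (measure_mono (Iic_subset_Iic.2 hqy)).trans (h y hy)

lemma measure_cdf_le_cdf (μ : Measure ℝ) [IsProbabilityMeasure μ] (t : ℝ) :
    μ {y | cdf μ y ≤ cdf μ t} = μ (Iic t) := by
  refine le_antisymm (measure_le_of_forall_measure_Iic_le μ fun y hy => ?_)
    (measure_mono fun y hy => monotone_cdf μ hy)
  rw [← ofReal_cdf, ← ofReal_cdf]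
  exact ENNReal.ofReal_le_ofReal hy

lemma exists_measure_cdf_le_ne_zero_and_measure_lt_cdf_ne_zero {μ : Measure ℝ}
    [IsProbabilityMeasure μ] (h : ¬ ∃ c, μ {c} = 1) :
    ∃ r, μ {y | cdf μ y ≤ r} ≠ 0 ∧ μ {y | r < cdf μ y} ≠ 0 := by
  obtain ⟨t, hle, hlt⟩ := exists_measure_le_ne_zero_and_measure_lt_ne_zero (μ := μ) (f := id) <| by
    rintro ⟨c, hc⟩
    refine h ⟨c, (prob_compl_eq_zero_iff (measurableSet_singleton c)).1 ?_⟩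
    exact ae_iff.1 hc
  have hmeas : MeasurableSet {y | cdf μ y ≤ cdf μ t} :=
    measurableSet_le (monotone_cdf μ).measurable measurable_const
  refine ⟨cdf μ t, by rwa [measure_cdf_le_cdf], ?_⟩
  have hcompl : {y | cdf μ t < cdf μ y} = {y | cdf μ y ≤ cdf μ t}ᶜ := by ext; simp
  rwa [hcompl, prob_compl_eq_one_sub hmeas, measure_cdf_le_cdf,
    ← prob_compl_eq_one_sub measurableSet_Iic, compl_Iic]

/-- For a nonconstant random variable `Y` with CDF `F`, i.i.d. copies `Y₁, Y₂, Y₃`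
and `φ(y,y') = min(F y, F y')`:
`E[φ(Y₁,Y₂)²] - 2 E[φ(Y₁,Y₂)φ(Y₁,Y₃)] + (E[φ(Y₁,Y₂)])² > 0`. -/
theorem stmt_17 {Ω : Type*} [MeasureSpace Ω] [IsProbabilityMeasure (ℙ : Measure Ω)]
    (Y : Fin 3 → Ω → ℝ) (hY : ∀ i, Measurable (Y i))
    (hindep : iIndepFun Y ℙ)
    (μ : Measure ℝ) (hlaw : ∀ i, Measure.map (Y i) ℙ = μ)
    (hnonconst : ¬ ∃ c : ℝ, μ {c} = 1)
    (F : ℝ → ℝ) (hF : ∀ t, F t = (μ (Set.Iic t)).toReal)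
    (φ : ℝ → ℝ → ℝ) (hφ : ∀ y y', φ y y' = min (F y) (F y')) :
    0 < (∫ ω, (φ (Y 0 ω) (Y 1 ω)) ^ 2 ∂(ℙ : Measure Ω))
      - 2 * (∫ ω, φ (Y 0 ω) (Y 1 ω) * φ (Y 0 ω) (Y 2 ω) ∂(ℙ : Measure Ω))
      + (∫ ω, φ (Y 0 ω) (Y 1 ω) ∂(ℙ : Measure Ω)) ^ 2 := by
  have : IsProbabilityMeasure μ := hlaw 0 ▸ Measure.isProbabilityMeasure_map (hY 0).aemeasurable
  obtain rfl : F = cdf μ := funext fun t => by rw [hF, cdf_eq_real, measureReal_def]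
  have hφm : Measurable (uncurry φ) := by
    have : uncurry φ = fun p => min (cdf μ p.1) (cdf μ p.2) := funext fun p => hφ p.1 p.2
    rw [this]
    exact ((monotone_cdf μ).measurable.comp measurable_fst).min
      ((monotone_cdf μ).measurable.comp measurable_snd)
  have hφC : ∀ y y', ‖φ y y'‖ ≤ 1 := fun y y' => by
    rw [hφ, Real.norm_of_nonneg (le_min (cdf_nonneg μ y) (cdf_nonneg μ y'))]
    exact (min_le_left _ _).trans (cdf_le_one μ y)
  have hsymm : ∀ y y', φ y y' = φ y' y := fun y y' => by rw [hφ, hφ, min_comm]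
  obtain ⟨r, hA, hB⟩ := exists_measure_cdf_le_ne_zero_and_measure_lt_cdf_ne_zero hnonconst
  rw [hindep.integral_kernel_eq_integral_hoeffdingResidual_sq hY hlaw (by decide) (by decide)
    (by decide) hφm hφC hsymm]
  exact integral_hoeffdingResidual_sq_pos_of_eq_min hφm hφC hφ hA hB
end

section
/- Let Y be a real random variable whose CDF F satisfies F(Y) = c almost surely for some constant c. Then Y is almost surely constant. -/
open MeasureTheory ProbabilityTheory

/-!
Let `μ` be the law of `Y` and `S = {F = c}`, a set of full `μ`-measure. For `y < z` in `S`,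
`μ (Ioc y z) = F z - F y = 0`, so every point of `S` other than its minimum has a null
neighbourhood relative to `S`; by second countability these points form a null set. Hence `S`
has a minimum `a`, and `μ` is concentrated at `a`.
-/

open Set Filter Topology

section LinearOrder

variable {α : Type*} [LinearOrder α] [TopologicalSpace α] [OrderTopology α]
  [SecondCountableTopology α] [MeasurableSpace α] {μ : Measure α} {S : Set α}

theorem measure_setOf_exists_lt_eq_zero (hS : ∀ y ∈ S, ∀ z ∈ S, μ (Ioc y z) = 0) :
    μ {z ∈ S | ∃ y ∈ S, y < z} = 0 := by
  refine measure_null_of_locally_null _ fun z ⟨hzS, y, hyS, hyz⟩ => ?_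
  by_cases hmax : ∃ z' ∈ S, z < z'
  · obtain ⟨z', hz'S, hzz'⟩ := hmax
    exact ⟨Ioo y z', mem_nhdsWithin_of_mem_nhds (Ioo_mem_nhds hyz hzz'),
      measure_mono_null Ioo_subset_Ioc_self (hS y hyS z' hz'S)⟩
  · push Not at hmax
    refine ⟨Ioc y z, mem_of_superset (inter_mem_nhdsWithin _ (Ioi_mem_nhds hyz)) ?_, hS y hyS z hzS⟩
    exact fun x ⟨⟨hxS, _⟩, hyx⟩ => ⟨hyx, hmax x hxS⟩

theorem exists_measure_singleton_eq_one [IsProbabilityMeasure μ] [MeasurableSingletonClass α]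
    (hS : ∀ᵐ x ∂μ, x ∈ S) (hIoc : ∀ y ∈ S, ∀ z ∈ S, μ (Ioc y z) = 0) :
    ∃ a, μ {a} = 1 := by
  have hmin : ∀ᵐ x ∂μ, x ∈ S ∧ ∀ y ∈ S, x ≤ y := by
    filter_upwards [hS, measure_eq_zero_iff_ae_notMem.mp (measure_setOf_exists_lt_eq_zero hIoc)]
      with x hxS hx
    exact ⟨hxS, fun y hyS => not_lt.mp fun hyx => hx ⟨hxS, y, hyS, hyx⟩⟩
  obtain ⟨a, haS, ha⟩ := hmin.exists
  refine ⟨a, (prob_compl_eq_zero_iff (measurableSet_singleton a)).mp ?_⟩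
  refine measure_eq_zero_iff_ae_notMem.mpr ?_
  filter_upwards [hmin] with x ⟨hxS, hx⟩
  exact fun hxa => hxa (le_antisymm (hx a haS) (ha x hxS))

end LinearOrder

theorem exists_measure_singleton_eq_one_of_ae_cdf_eq (μ : Measure ℝ) [IsProbabilityMeasure μ]
    {c : ℝ} (h : ∀ᵐ x ∂μ, cdf μ x = c) : ∃ a, μ {a} = 1 := by
  refine exists_measure_singleton_eq_one (S := {x | cdf μ x = c}) h
    fun y (hy : cdf μ y = c) z (hz : cdf μ z = c) => ?_
  rw [← measure_cdf μ, StieltjesFunction.measure_Ioc, hy, hz, sub_self, ENNReal.ofReal_zero]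

/-- If the CDF `F` of a real random variable `Y` satisfies `F(Y) = c` almost
surely for some constant `c`, then `Y` is almost surely constant. -/
theorem stmt_19 {Ω : Type*} [MeasureSpace Ω] [IsProbabilityMeasure (ℙ : Measure Ω)]
    (Y : Ω → ℝ) (hY : Measurable Y)
    (F : ℝ → ℝ) (hF : ∀ t, F t = (ℙ {ω | Y ω ≤ t}).toReal)
    (c : ℝ) (hc : ∀ᵐ ω ∂(ℙ : Measure Ω), F (Y ω) = c) :
    ∃ y₀ : ℝ, ℙ {ω | Y ω = y₀} = 1 := by
  set μ := (ℙ : Measure Ω).map Y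
  have : IsProbabilityMeasure μ := Measure.isProbabilityMeasure_map hY.aemeasurable
  have hF_eq : F = cdf μ := funext fun t => by
    rw [hF, cdf_eq_real, measureReal_def, Measure.map_apply hY measurableSet_Iic]
    rfl
  subst hF_eq
  have hμ : ∀ᵐ x ∂μ, cdf μ x = c :=
    (ae_map_iff hY.aemeasurable ((cdf μ).mono.measurable (measurableSet_singleton c))).mpr hc
  obtain ⟨a, ha⟩ := exists_measure_singleton_eq_one_of_ae_cdf_eq μ hμ
  exact ⟨a, by rwa [Measure.map_apply hY (measurableSet_singleton a)] at ha⟩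
end
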